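/- Let X be a random vector in ℝⁿ and μ a discrete random variable on the same probability space, taking countably many values with positive probability. If for each value t with P(μ = t) > 0 the conditional distribution of X given {μ = t} is a sum of q standard Gaussian random vectors in ℝⁿ, then X itself is a sum of q standard Gaussian random vectors in ℝⁿ. -/

import Mathlib

open MeasureTheory ProbabilityTheory

/-- The standard Gaussian measure on `ℝⁿ`. -/
noncomputable def stdGaussian (n : ℕ) : Measure (Fin n → ℝ) :=
  Measure.pi fun _ => gaussianReal 0 1

/-- A probability distribution `ν` on `ℝⁿ` is a sum of `q` standard Gaussian random vectors if
there exist `q` (not necessarily independent) standard Gaussian random vectors on a common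
probability space whose sum has distribution `ν`. -/
def IsSumOfGaussians (n q : ℕ) (ν : Measure (Fin n → ℝ)) : Prop :=
  ∃ (Ω : Type) (_ : MeasurableSpace Ω) (μ : Measure Ω) (_ : IsProbabilityMeasure μ)
    (G : Fin q → Ω → Fin n → ℝ), (∀ i, Measurable (G i)) ∧
    (∀ i, μ.map (G i) = stdGaussian n) ∧
    μ.map (fun ω => ∑ i, G i ω) = ν

/-! A sum of `q` standard Gaussian vectors is the image under `(xᵢ)ᵢ ↦ ∑ᵢ xᵢ` of their joint law,
a probability measure on `(ℝⁿ)^q` whose marginals are all standard Gaussian. A mixture of such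
couplings is again one, and by the law of total probability the law of `X` is the mixture of its
conditional laws given `M = t` with weights `P(M = t)`; mixing the corresponding couplings with the
same weights exhibits the law of `X` as a sum of `q` standard Gaussians. -/

open scoped ENNReal

instance isProbabilityMeasure_stdGaussian (n : ℕ) : IsProbabilityMeasure (stdGaussian n) := by
  unfold _root_.stdGaussian; infer_instance

section TotalProbability

variable {Ω T : Type*} [MeasurableSpace Ω] {μ : Measure Ω}

lemma ProbabilityTheory.measure_smul_cond {s : Set Ω} (hs : μ s ≠ ∞) :
    μ s • μ[|s] = μ.restrict s := by
  by_cases h0 : μ s = 0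
  · rw [h0, zero_smul, Measure.restrict_eq_zero.2 h0]
  · rw [cond, smul_smul, ENNReal.mul_inv_cancel h0 hs, one_smul]

variable [MeasurableSpace T] [MeasurableSingletonClass T] [Countable T] {M : Ω → T}

lemma ProbabilityTheory.tsum_measure_fiber (hM : Measurable M) :
    ∑' t, μ (M ⁻¹' {t}) = μ Set.univ := by
  rw [← measure_iUnion (pairwise_disjoint_fiber M) fun t => hM (.singleton t),
    ← Set.preimage_iUnion, Set.iUnion_of_singleton, Set.preimage_univ]

lemma ProbabilityTheory.sum_measure_smul_cond_fiber (hM : Measurable M) (μ : Measure Ω)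
    [IsFiniteMeasure μ] : Measure.sum (fun t => μ (M ⁻¹' {t}) • μ[|M ← t]) = μ := by
  simp_rw [measure_smul_cond (measure_ne_top μ _)]
  rw [← Measure.restrict_iUnion (pairwise_disjoint_fiber M) fun t => hM (.singleton t),
    ← Set.preimage_iUnion, Set.iUnion_of_singleton, Set.preimage_univ, Measure.restrict_univ]

end TotalProbability

lemma MeasureTheory.Measure.sum_smul_const {α ι : Type*} [MeasurableSpace α] {w : ι → ℝ≥0∞}
    (μ : Measure α) : Measure.sum (fun i => w i • μ) = (∑' i, w i) • μ := by
  ext s hs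
  simp only [Measure.sum_apply _ hs, Measure.smul_apply, smul_eq_mul, ENNReal.tsum_mul_right]

lemma MeasureTheory.Measure.isProbabilityMeasure_sum_smul {α ι : Type*} [MeasurableSpace α]
    {w : ι → ℝ≥0∞} (hw : ∑' i, w i = 1) (π : ι → Measure α) [∀ i, IsProbabilityMeasure (π i)] :
    IsProbabilityMeasure (Measure.sum fun i => w i • π i) := by
  constructor
  simp only [Measure.sum_apply _ MeasurableSet.univ, Measure.smul_apply, measure_univ,
    smul_eq_mul, mul_one, hw]

def IsStdGaussianCoupling (n q : ℕ) (π : Measure (Fin q → Fin n → ℝ)) : Prop :=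
  IsProbabilityMeasure π ∧ ∀ i, π.map (fun x => x i) = stdGaussian n

lemma isSumOfGaussians_iff {n q : ℕ} {ν : Measure (Fin n → ℝ)} :
    IsSumOfGaussians n q ν ↔
      ∃ π, IsStdGaussianCoupling n q π ∧ π.map (fun x => ∑ i, x i) = ν := by
  constructor
  · rintro ⟨Ω, _, μ, _, G, hG, hmarg, hsum⟩
    have hGvec : Measurable fun ω i => G i ω := measurable_pi_lambda _ hG
    refine ⟨μ.map fun ω i => G i ω,
      ⟨Measure.isProbabilityMeasure_map hGvec.aemeasurable, fun i => ?_⟩, ?_⟩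
    · rw [Measure.map_map (measurable_pi_apply i) hGvec]
      exact hmarg i
    · rw [Measure.map_map (by fun_prop) hGvec]
      exact hsum
  · rintro ⟨π, ⟨hπ, hmarg⟩, hsum⟩
    exact ⟨_, _, π, hπ, fun i x => x i, measurable_pi_apply, hmarg, hsum⟩

lemma isStdGaussianCoupling_diagonal (n q : ℕ) :
    IsStdGaussianCoupling n q ((_root_.stdGaussian n).map fun x _ => x) := by
  refine ⟨Measure.isProbabilityMeasure_map (by fun_prop), fun i => ?_⟩
  rw [Measure.map_map (measurable_pi_apply i) (by fun_prop)]
  exact Measure.map_id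

lemma IsStdGaussianCoupling.sum_smul {n q : ℕ} {ι : Type*} {w : ι → ℝ≥0∞}
    (hw : ∑' i, w i = 1) {π : ι → Measure (Fin q → Fin n → ℝ)}
    (hπ : ∀ i, IsStdGaussianCoupling n q (π i)) :
    IsStdGaussianCoupling n q (Measure.sum fun i => w i • π i) := by
  have := fun i => (hπ i).1
  refine ⟨Measure.isProbabilityMeasure_sum_smul hw π, fun j => ?_⟩
  rw [Measure.map_sum (measurable_pi_apply j).aemeasurable]
  simp_rw [Measure.map_smul, (hπ _).2 j]
  rw [Measure.sum_smul_const, hw, one_smul]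

theorem IsSumOfGaussians.sum_smul {n q : ℕ} {ι : Type*} {w : ι → ℝ≥0∞} (hw : ∑' i, w i = 1)
    {ν : ι → Measure (Fin n → ℝ)} (h : ∀ i, w i ≠ 0 → IsSumOfGaussians n q (ν i)) :
    IsSumOfGaussians n q (Measure.sum fun i => w i • ν i) := by
  have hcoupling : ∀ i, ∃ π, IsStdGaussianCoupling n q π ∧
      (w i ≠ 0 → π.map (fun x => ∑ j, x j) = ν i) := by
    intro i
    by_cases hi : w i = 0
    · -- any coupling will do where the weight vanishes
      exact ⟨_, isStdGaussianCoupling_diagonal n q, fun h => absurd hi h⟩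
    · obtain ⟨π, hπ, hsum⟩ := isSumOfGaussians_iff.1 (h i hi)
      exact ⟨π, hπ, fun _ => hsum⟩
  choose π hπ hsum using hcoupling
  refine isSumOfGaussians_iff.2 ⟨_, IsStdGaussianCoupling.sum_smul hw hπ, ?_⟩
  rw [Measure.map_sum (by fun_prop)]
  congr! 2 with i
  rw [Measure.map_smul]
  by_cases hi : w i = 0
  · simp only [hi, zero_smul]
  · rw [hsum i hi]

/-- Local-to-global: if `X` conditioned on each atom `{M = t}` of a discrete random variable `M`
is a sum of `q` standard Gaussian random vectors, then so is `X`. -/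
theorem isSumOfGaussians_of_cond (n q : ℕ) (Ω : Type) [MeasurableSpace Ω]
    (μ : Measure Ω) [IsProbabilityMeasure μ]
    (T : Type) [MeasurableSpace T] [MeasurableSingletonClass T] [Countable T]
    (X : Ω → Fin n → ℝ) (hX : Measurable X) (M : Ω → T) (hM : Measurable M)
    (h : ∀ t : T, μ {ω | M ω = t} ≠ 0 →
      IsSumOfGaussians n q ((μ[|{ω | M ω = t}]).map X)) :
    IsSumOfGaussians n q (μ.map X) := by
  have hw : ∑' t, μ (M ⁻¹' {t}) = 1 := by rw [tsum_measure_fiber hM, measure_univ]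
  rw [← sum_measure_smul_cond_fiber hM μ, Measure.map_sum hX.aemeasurable]
  simp_rw [Measure.map_smul]
  exact IsSumOfGaussians.sum_smul hw h
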